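/- Let F be a field and let P ∈ F[x_1,…,x_n] be a polynomial with deg(P) < |F|. If φ, ψ : F^n → F^n are maps such that P(x + λy) = P(φ(x) + λψ(y)) for all x, y ∈ F^n and λ ∈ F, and φ is surjective, then for every l ∈ L_P the function v ↦ l(ψ(v)) coincides with some element of L_P; that is, there exists l' ∈ L_P with l(ψ(v)) = l'(v) for all v ∈ F^n. -/

import Mathlib

open scoped Classical

noncomputable section

/-- The radical of a function `f : V → F`, as a linear subspace of `V`. -/
def funRadical {F V : Type*} [Field F] [AddCommGroup V] [Module F V]
    (f : V → F) : Submodule F V where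
  carrier := {w | ∀ (v : V) (lam : F), f (v + lam • w) = f v}
  zero_mem' := by intro v lam; simp
  add_mem' := by
    intro a b ha hb v lam
    have h1 : v + lam • (a + b) = (v + lam • a) + lam • b := by
      rw [smul_add]; abel
    rw [h1, hb (v + lam • a) lam, ha v lam]
  smul_mem' := by
    intro c a ha v lam
    have h1 : v + lam • (c • a) = v + (lam * c) • a := by rw [smul_smul]
    rw [h1, ha v (lam * c)]

/-- The directional derivative of a multivariate polynomial `P` along `v` at `a`:
the coefficient of `t` in the univariate polynomial `P (a + t • v)`. -/
def dirDeriv {F : Type*} [Field F] {n : ℕ}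
    (P : MvPolynomial (Fin n) F) (a v : Fin n → F) : F :=
  ((MvPolynomial.aeval
    (fun i => Polynomial.C (a i) + Polynomial.C (v i) * Polynomial.X)) P).coeff 1

/-- The space `L_P`: the span of the functionals `v ↦ ∂P/∂v(a)` over all `a ∈ F^n`. -/
def polyLP {F : Type*} [Field F] {n : ℕ} (P : MvPolynomial (Fin n) F) :
    Submodule F ((Fin n → F) → F) :=
  Submodule.span F (Set.range fun a : Fin n → F => fun v => dirDeriv P a v)

/-!
The derivative `∂P/∂v(a)` is the linear coefficient of the restriction `t ↦ P (a + t • v)` of `P`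
to a line, a polynomial of degree at most `deg P < |F|`, hence determined by its values. The
hypothesis thus gives `∂P/∂(ψ v)(φ x) = ∂P/∂v(x)`: precomposition with `ψ` sends the generator
of `L_P` at `φ x` to the generator at `x`, and since `φ` is surjective it maps `L_P` into itself.
-/

namespace MvPolynomial

open Polynomial

variable {R σ : Type*}

def restrictToLine [CommSemiring R] (P : MvPolynomial σ R) (a v : σ → R) : R[X] :=
  aeval (fun i => Polynomial.C (a i) + Polynomial.C (v i) * Polynomial.X) P

theorem eval_restrictToLine [CommSemiring R] (P : MvPolynomial σ R) (a v : σ → R) (t : R) :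
    (P.restrictToLine a v).eval t = eval (a + t • v) P := by
  rw [restrictToLine, ← Polynomial.coe_aeval_eq_eval, comp_aeval_apply, ← coe_aeval_eq_eval,
    RingHom.coe_coe]
  congr with i
  simp only [map_add, map_mul, Polynomial.aeval_C, Polynomial.aeval_X, Algebra.algebraMap_self,
    RingHom.id_apply, Pi.add_apply, Pi.smul_apply, smul_eq_mul]
  ring

theorem natDegree_aeval_le_totalDegree [CommSemiring R] (P : MvPolynomial σ R) {q : σ → R[X]}
    (hq : ∀ i, (q i).natDegree ≤ 1) : (aeval q P).natDegree ≤ P.totalDegree := by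
  rw [aeval_def, eval₂_eq, Polynomial.algebraMap_eq]
  refine Polynomial.natDegree_sum_le_of_forall_le _ _ fun d hd => ?_
  calc (Polynomial.C (coeff d P) * ∏ i ∈ d.support, q i ^ d i).natDegree
      ≤ ∑ i ∈ d.support, (q i ^ d i).natDegree :=
        (natDegree_C_mul_le _ _).trans (natDegree_prod_le _ _)
    _ ≤ ∑ i ∈ d.support, d i * 1 :=
        Finset.sum_le_sum fun i _ => natDegree_pow_le.trans (Nat.mul_le_mul_left _ (hq i))
    _ ≤ P.totalDegree := by simp only [mul_one]; exact le_totalDegree hd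

theorem natDegree_restrictToLine_le [CommSemiring R] (P : MvPolynomial σ R) (a v : σ → R) :
    (P.restrictToLine a v).natDegree ≤ P.totalDegree :=
  natDegree_aeval_le_totalDegree P fun i =>
    natDegree_add_le_of_degree_le (by simp) ((natDegree_C_mul_le _ _).trans natDegree_X_le)

theorem restrictToLine_eq_of_eval_eq [CommRing R] [IsDomain R] {P : MvPolynomial σ R}
    (hdeg : (P.totalDegree : Cardinal) < Cardinal.mk R) {a v b w : σ → R}
    (heval : ∀ t : R, eval (a + t • v) P = eval (b + t • w) P) :
    P.restrictToLine a v = P.restrictToLine b w := by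
  rw [← sub_eq_zero]
  refine eq_zero_of_forall_eval_zero_of_natDegree_lt_card _
    (fun t => by simp [eval_restrictToLine, heval t]) (lt_of_le_of_lt ?_ hdeg)
  exact_mod_cast (natDegree_sub_le _ _).trans
    (max_le (natDegree_restrictToLine_le P a v) (natDegree_restrictToLine_le P b w))

end MvPolynomial

open MvPolynomial

section

variable {F : Type*} [Field F] {n : ℕ} {P : MvPolynomial (Fin n) F}

theorem dirDeriv_eq_coeff_restrictToLine (a v : Fin n → F) :
    dirDeriv P a v = (P.restrictToLine a v).coeff 1 :=
  rfl

theorem dirDeriv_eq_of_eval_eq (hdeg : (P.totalDegree : Cardinal) < Cardinal.mk F)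
    {a v b w : Fin n → F} (heval : ∀ t : F, eval (a + t • v) P = eval (b + t • w) P) :
    dirDeriv P a v = dirDeriv P b w := by
  rw [dirDeriv_eq_coeff_restrictToLine, dirDeriv_eq_coeff_restrictToLine,
    restrictToLine_eq_of_eval_eq hdeg heval]

theorem polyLP_map_funLeft_le (hdeg : (P.totalDegree : Cardinal) < Cardinal.mk F)
    {phi psi : (Fin n → F) → (Fin n → F)}
    (h : ∀ (x y : Fin n → F) (t : F), eval (x + t • y) P = eval (phi x + t • psi y) P)
    (hsurj : Function.Surjective phi) :
    (polyLP P).map (LinearMap.funLeft F F psi) ≤ polyLP P := by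
  refine (Submodule.map_span_le _ _ _).2 ?_
  rintro _ ⟨a, rfl⟩
  obtain ⟨x, rfl⟩ := hsurj a
  have hx : LinearMap.funLeft F F psi (dirDeriv P (phi x)) = dirDeriv P x :=
    funext fun v => dirDeriv_eq_of_eval_eq hdeg fun t => (h x v t).symm
  exact hx ▸ Submodule.subset_span ⟨x, rfl⟩

end

theorem stmt_13 {F : Type*} [Field F] {n : ℕ}
    (P : MvPolynomial (Fin n) F)
    (hdeg : (P.totalDegree : Cardinal) < Cardinal.mk F)
    (phi psi : (Fin n → F) → (Fin n → F))
    (h : ∀ (x y : Fin n → F) (lam : F),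
      MvPolynomial.eval (x + lam • y) P = MvPolynomial.eval (phi x + lam • psi y) P)
    (hsurj : Function.Surjective phi) :
    ∀ l ∈ polyLP P, ∃ l' ∈ polyLP P, ∀ v : Fin n → F, l (psi v) = l' v :=
  fun l hl => ⟨l ∘ psi, polyLP_map_funLeft_le hdeg h hsurj ⟨l, hl, rfl⟩, fun _ => rfl⟩

end
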